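/- arXiv:2508.09673 — 7 statements merged into one kernel-verified Lean document; each statement's English description precedes it below -/
import Mathlib

section
/- Let A ∈ Z_q^{n×m}, B ∈ Z_q^{n×(m·ℓ·n)}, x ∈ Z_q^m, y ∈ Z_q^ℓ, S ∈ Z_q^{n×(m·ℓ)}, and error matrices E' ∈ Z^{n×(m·ℓ)}, Ê ∈ Z^{m×(m·ℓ)}. Define C := Aᵀ·S + Aᵀ·E' + Ê + I_m ⊗ yᵀ, d := A·x, v := Cᵀ·x, and w := −Sᵀ·d. Then v + w = x ⊗ y + (Aᵀ·E' + Ê)ᵀ·x. -/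
open Matrix

/-- Correctness identity of the half-succinct NI-OTE:
with `C := Aᵀ·S + Aᵀ·E' + Ê + I_m ⊗ yᵀ`, `d := A·x`, `v := Cᵀ·x`, `w := −Sᵀ·d`,
we have `v + w = x ⊗ y + (Aᵀ·E' + Ê)ᵀ·x`. -/
theorem stmt1 (q n m ℓ : ℕ) (A : Matrix (Fin n) (Fin m) (ZMod q))
    (S : Matrix (Fin n) (Fin m × Fin ℓ) (ZMod q))
    (E' : Matrix (Fin n) (Fin m × Fin ℓ) ℤ)
    (Ehat : Matrix (Fin m) (Fin m × Fin ℓ) ℤ)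
    (x : Fin m → ZMod q) (y : Fin ℓ → ZMod q) :
    (Aᵀ * S + Aᵀ * E'.map (Int.cast : ℤ → ZMod q) + Ehat.map (Int.cast : ℤ → ZMod q) +
        Matrix.of fun i (p : Fin m × Fin ℓ) => if p.1 = i then y p.2 else 0)ᵀ.mulVec x +
      -(Sᵀ.mulVec (A.mulVec x)) =
    (fun p : Fin m × Fin ℓ => x p.1 * y p.2) +
      (Aᵀ * E'.map (Int.cast : ℤ → ZMod q) + Ehat.map (Int.cast : ℤ → ZMod q))ᵀ.mulVec x := by
  funext p
  simp [transpose_add, add_mulVec, Pi.add_apply, ← mulVec_mulVec, mulVec_transpose,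
    vecMul, mulVec, dotProduct, of_apply, Finset.mul_sum, Finset.sum_ite_eq,
    mul_comm, transpose_mul]
  ring
end

section
/- Let M ∈ Z_q^{m×ℓ}, y ∈ Z_q^ℓ, and let x := G⁻¹(vec(M)) be the bit decomposition of the vectorization of M. Then Lin(I_{m·ℓ·log q}) · (x ⊗ (y ⊗ g_qᵀ)) = M·y, where Lin is the matrix linearisation map and g_q = (1,2,…,2^{log q}). -/
open Matrix

/-- Gadget row vector `g_q = (1, 2, …, 2^{log q})`. -/
def gq (q lq : ℕ) : Fin lq → ZMod q := fun b => 2 ^ (b : ℕ)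

/-- MOLE-from-OTE correctness identity: if `x = G⁻¹(vec(M))` is a binary
decomposition of (the vectorization of) `M`, then
`Lin(I_{m·ℓ·log q})·(x ⊗ (y ⊗ g_qᵀ)) = M·y`; the left hand side is the matrix
`I_m ⊗ (y ⊗ g_q)ᵀ` (the image of the identity under linearisation) applied to `x`. -/
theorem stmt7 (q m ℓ lq : ℕ) (M : Matrix (Fin m) (Fin ℓ) (ZMod q))
    (y : Fin ℓ → ZMod q) (x : (Fin m × Fin ℓ) × Fin lq → ZMod q)
    (hbin : ∀ p, x p = 0 ∨ x p = 1)
    (hdec : ∀ p : Fin m × Fin ℓ, (∑ b : Fin lq, gq q lq b * x (p, b)) = M p.1 p.2) :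
    (Matrix.of fun (h : Fin m) (p : (Fin m × Fin ℓ) × Fin lq) =>
        if p.1.1 = h then y p.1.2 * gq q lq p.2 else 0).mulVec x = M.mulVec y := by
  funext h
  simp only [mulVec, dotProduct, of_apply, ite_mul, zero_mul]
  rw [Fintype.sum_prod_type]
  rw [Fintype.sum_prod_type]
  rw [Finset.sum_comm]
  calc ∑ j : Fin ℓ, ∑ i : Fin m, ∑ b : Fin lq,
        (if i = h then y j * gq q lq b * x ((i, j), b) else 0)
      = ∑ j : Fin ℓ, ∑ b : Fin lq, y j * gq q lq b * x ((h, j), b) := by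
        refine Finset.sum_congr rfl fun j _ => ?_
        rw [Finset.sum_comm]
        refine Finset.sum_congr rfl fun b _ => ?_
        simp
    _ = ∑ j : Fin ℓ, y j * M h j := by
        refine Finset.sum_congr rfl fun j _ => ?_
        rw [← hdec (h, j), Finset.mul_sum]
        exact Finset.sum_congr rfl fun b _ => by ring
    _ = _ := by simp [mulVec, dotProduct, mul_comm]
end

section
/- Multiplication of adaptive lattice encodings with chained keys: for all x₀, x₁ ∈ Z_q, vectors s₀, s₁, s₂ ∈ Z_q^k, matrices A₀, A₁ ∈ Z_q^{k×(k·log q)} and errors e₀, e₁, it holds that −LEnc_{A₀}(x₀; s₀, s₁, e₀)·G⁻¹(A₁) + x₀·LEnc_{A₁}(x₁; s₁, s₂, e₁) = LEnc_{−A₀·G⁻¹(A₁)}(x₀·x₁; s₀, s₂, −G⁻¹(A₁)ᵀ·e₀ + x₀·e₁). -/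
open Matrix

/-- Gadget matrix `G = I_k ⊗ g_q ∈ Z_q^{k×(k·log q)}`. -/
def Gmat (q k lq : ℕ) : Matrix (Fin k) (Fin k × Fin lq) (ZMod q) :=
  Matrix.of fun i p => if p.1 = i then gq q lq p.2 else 0

/-- Adaptive lattice encoding `LEnc_A(x; s, r, e) := sᵀA + x·rᵀG + eᵀ`. -/
def LEnc (q k lq : ℕ) (A : Matrix (Fin k) (Fin k × Fin lq) (ZMod q))
    (x : ZMod q) (s r : Fin k → ZMod q) (e : Fin k × Fin lq → ZMod q) :
    Fin k × Fin lq → ZMod q :=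
  Matrix.vecMul s A + x • Matrix.vecMul r (Gmat q k lq) + e

/-- Multiplication of adaptive lattice encodings with chained keys:
`−LEnc_{A₀}(x₀; s₀, s₁, e₀)·G⁻¹(A₁) + x₀·LEnc_{A₁}(x₁; s₁, s₂, e₁)
  = LEnc_{−A₀·G⁻¹(A₁)}(x₀·x₁; s₀, s₂, −G⁻¹(A₁)ᵀ·e₀ + x₀·e₁)`,
where `G⁻¹(A₁)` is any matrix `D` with `G·D = A₁`. -/
theorem stmt10 (q k lq : ℕ) (x₀ x₁ : ZMod q) (s₀ s₁ s₂ : Fin k → ZMod q)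
    (A₀ A₁ : Matrix (Fin k) (Fin k × Fin lq) (ZMod q))
    (e₀ e₁ : Fin k × Fin lq → ZMod q)
    (D : Matrix (Fin k × Fin lq) (Fin k × Fin lq) (ZMod q))
    (hD : Gmat q k lq * D = A₁) :
    -(Matrix.vecMul (LEnc q k lq A₀ x₀ s₀ s₁ e₀) D) + x₀ • LEnc q k lq A₁ x₁ s₁ s₂ e₁ =
      LEnc q k lq (-(A₀ * D)) (x₀ * x₁) s₀ s₂ (-(Dᵀ.mulVec e₀) + x₀ • e₁) := by
  subst hD
  unfold LEnc
  have h1 : Dᵀ.mulVec e₀ = Matrix.vecMul e₀ D := by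
    rw [← Matrix.vecMul_transpose, Matrix.transpose_transpose]
  rw [h1]
  simp only [Matrix.add_vecMul, Matrix.smul_vecMul, ← Matrix.vecMul_vecMul,
    Matrix.vecMul_neg, smul_add]
  funext p
  simp only [Pi.add_apply, Pi.neg_apply, Pi.smul_apply, smul_eq_mul]
  ring
end

section
/- Compressed-encoding expansion identity: suppose the OTE satisfies v + w = (x ⊗ s₁ ⊗ g_qᵀ) + e' where w = P·(d ⊗ r ⊗ g_qᵀ) and d is the OTE hash of x, and let h := s₀ᵀA + rᵀ(dᵀ ⊗ G) + eᵀ. Then h·Pᵀ + vᵀ = s₀ᵀ·A·Pᵀ + s₁ᵀ·(xᵀ ⊗ G) + (eᵀPᵀ + e'ᵀ); that is, the expanded value is an adaptive lattice encoding of x under matrix A·Pᵀ, encryption key s₀ and authentication key s₁. -/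
open Matrix

lemma kron_vecMul (q k lq n : ℕ) (c : Fin n → ZMod q) (r : Fin k → ZMod q) :
    Matrix.vecMul r
      (Matrix.of fun i (p : Fin n × (Fin k × Fin lq)) => c p.1 * Gmat q k lq i p.2) =
    fun p => c p.1 * (r p.2.1 * gq q lq p.2.2) := by
  funext p
  simp only [Matrix.vecMul, dotProduct, Matrix.of_apply, Gmat, mul_ite, mul_zero]
  rw [Finset.sum_eq_single p.2.1]
  · simp [mul_comm, mul_left_comm]
  · intro b _ hb; simp [hb.symm]
  · simp

/-- Compressed-encoding expansion identity: if the OTE shares satisfy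
`v + P·(d ⊗ r ⊗ g_qᵀ) = (x ⊗ s₁ ⊗ g_qᵀ) + e'` where `d` is the OTE hash of `x`,
and `h := s₀ᵀA + rᵀ(dᵀ ⊗ G) + eᵀ`, then
`h·Pᵀ + vᵀ = s₀ᵀ·(A·Pᵀ) + s₁ᵀ·(xᵀ ⊗ G) + (eᵀPᵀ + e'ᵀ)`. -/
theorem stmt12 (q k lq m n : ℕ)
    (A : Matrix (Fin k) (Fin n × (Fin k × Fin lq)) (ZMod q))
    (P : Matrix (Fin m × (Fin k × Fin lq)) (Fin n × (Fin k × Fin lq)) (ZMod q))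
    (x : Fin m → ZMod q) (d : Fin n → ZMod q)
    (s₀ s₁ r : Fin k → ZMod q)
    (e : Fin n × (Fin k × Fin lq) → ZMod q)
    (v e' : Fin m × (Fin k × Fin lq) → ZMod q)
    (hOTE : v + P.mulVec
        (fun p : Fin n × (Fin k × Fin lq) => d p.1 * (r p.2.1 * gq q lq p.2.2)) =
      (fun p : Fin m × (Fin k × Fin lq) => x p.1 * (s₁ p.2.1 * gq q lq p.2.2)) + e') :
    Matrix.vecMul
        (Matrix.vecMul s₀ A +
          Matrix.vecMul r
            (Matrix.of fun i (p : Fin n × (Fin k × Fin lq)) => d p.1 * Gmat q k lq i p.2) +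
          e) Pᵀ + v =
      Matrix.vecMul s₀ (A * Pᵀ) +
        Matrix.vecMul s₁
          (Matrix.of fun i (p : Fin m × (Fin k × Fin lq)) => x p.1 * Gmat q k lq i p.2) +
        (Matrix.vecMul e Pᵀ + e') := by
  rw [Matrix.add_vecMul, Matrix.add_vecMul, Matrix.vecMul_vecMul,
    kron_vecMul, kron_vecMul, Matrix.vecMul_transpose]
  have : P.mulVec (fun p => d p.1 * (r p.2.1 * gq q lq p.2.2)) + v =
      (fun p : Fin m × (Fin k × Fin lq) => x p.1 * (s₁ p.2.1 * gq q lq p.2.2)) + e' := by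
    rw [add_comm]; exact hOTE
  abel_nf
  rw [← this]
  abel
end

section
/- Rounding of noisy secret shares: let q be even, p = 2, and suppose s₀ + s₁ = (q/2)·b + ê in Z_q with b ∈ {0,1} and |ê| < q/4 − δ for δ ≥ 0. If moreover s₀ mod q lies outside the intervals [q/4 − |ê|, q/4 + |ê|] and [3q/4 − |ê|, 3q/4 + |ê|], then ⌈s₀⌋₂ ⊕ ⌈s₁⌋₂ = b, where ⌈·⌋₂ denotes rounding an element of Z_q to the nearest multiple of q/2 and reducing modulo 2. -/
def round2 (q : ℕ) (x : ZMod q) : ℕ :=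
  if min x.val (q - x.val) ≤ ((x.val : ℤ) - ((q / 2 : ℕ) : ℤ)).natAbs then 0 else 1

lemma round2_eq (q : ℕ) (x : ZMod q) (hv : x.val < q) (heven : 2 ∣ q) :
    round2 q x = if 4 * x.val ≤ q ∨ 3 * q ≤ 4 * x.val then 0 else 1 := by
  unfold round2
  split_ifs <;> omega

/-- Rounding of noisy secret shares: if `s₀ + s₁ = (q/2)·b + ê` in `Z_q` with
`b ∈ {0,1}` and `|ê| < q/4 − δ`, and `s₀` lies outside the bad intervals
`[q/4 − |ê|, q/4 + |ê|]` and `[3q/4 − |ê|, 3q/4 + |ê|]`, then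
`⌈s₀⌋₂ ⊕ ⌈s₁⌋₂ = b`. -/
theorem stmt15 (q : ℕ) (hq : 0 < q) (heven : 2 ∣ q)
    (s₀ s₁ : ZMod q) (b : ℕ) (hb : b = 0 ∨ b = 1)
    (e δ : ℤ) (hδ : 0 ≤ δ) (he : |e| < (q : ℤ) / 4 - δ)
    (hsum : s₀ + s₁ = ((q / 2 : ℕ) : ZMod q) * (b : ZMod q) + (e : ZMod q))
    (hout1 : (s₀.val : ℤ) < (q : ℤ) / 4 - |e| ∨ (q : ℤ) / 4 + |e| < (s₀.val : ℤ))
    (hout2 : (s₀.val : ℤ) < 3 * (q : ℤ) / 4 - |e| ∨ 3 * (q : ℤ) / 4 + |e| < (s₀.val : ℤ)) :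
    (round2 q s₀ + round2 q s₁) % 2 = b := by
  haveI : NeZero q := ⟨hq.ne'⟩
  have hv0 : s₀.val < q := ZMod.val_lt s₀
  have hv1 : s₁.val < q := ZMod.val_lt s₁
  have he1 : e < (q:ℤ)/4 - δ := lt_of_le_of_lt (le_abs_self e) he
  have he2 : -((q:ℤ)/4 - δ) < e := by
    have := neg_abs_le e; linarith
  have h1 : (((s₀.val : ℤ) + s₁.val - ((q/2:ℕ) * b + e) : ℤ) : ZMod q) = 0 := by
    push_cast
    simp only [ZMod.natCast_val, ZMod.cast_id]
    rw [sub_eq_zero, hsum, mul_comm]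
    rw [show ((q:ℤ)/2) = ((q/2 : ℕ) : ℤ) from by omega, Int.cast_natCast, mul_comm]
  have hdvd : (q:ℤ) ∣ ((s₀.val : ℤ) + s₁.val - ((q/2:ℕ) * b + e)) :=
    (ZMod.intCast_zmod_eq_zero_iff_dvd _ q).mp h1
  obtain ⟨k, hk⟩ := hdvd
  rw [round2_eq q s₀ hv0 heven, round2_eq q s₁ hv1 heven]
  rcases hb with rfl | rfl <;>
  · have hub : (q:ℤ) * k < (q:ℤ) * 3 := by push_cast at hk ⊢; omega
    have hlb : (q:ℤ) * (-1) < (q:ℤ) * k := by push_cast at hk ⊢; omega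
    have hk3 : k < 3 := lt_of_mul_lt_mul_left hub (by positivity)
    have hk0 : -1 < k := lt_of_mul_lt_mul_left hlb (by positivity)
    have hkcase : k = 0 ∨ k = 1 ∨ k = 2 := by omega
    rcases abs_cases e with ⟨hae, _⟩ | ⟨hae, _⟩ <;> rw [hae] at hout1 hout2 <;>
      rcases hkcase with rfl | rfl | rfl <;> push_cast at hk <;> split_ifs <;> omega
end

section
/- Weak reverse TDH post-processing identity: suppose c = s₀ᵀ·A_f + s_dᵀ·(f(x)ᵀ ⊗ G) + ẽᵀ and b = s_dᵀ·B + aᵀ·(I_t ⊗ G) + eᵀ, and define F := −A_f·(I_ℓ ⊗ G⁻¹(B)) and z := −c·(I_ℓ ⊗ G⁻¹(B)) + f(x)ᵀ ⊗ b. Then z = s₀ᵀ·F + (f(x)ᵀ ⊗ aᵀ ⊗ g_q) − ẽᵀ·(I_ℓ ⊗ G⁻¹(B)) + f(x)ᵀ ⊗ eᵀ. -/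
open Matrix

private lemma sum3rev {α : Type*} [AddCommMonoid α] {n m p : Type*} [Fintype n] [Fintype m] [Fintype p]
    (f : n → m → p → α) :
    ∑ x, ∑ y, ∑ z, f x y z = ∑ z, ∑ y, ∑ x, f x y z := by
  calc ∑ x, ∑ y, ∑ z, f x y z
      = ∑ x, ∑ z, ∑ y, f x y z := Finset.sum_congr rfl fun _ _ => Finset.sum_comm
    _ = ∑ z, ∑ x, ∑ y, f x y z := Finset.sum_comm
    _ = ∑ z, ∑ y, ∑ x, f x y z := Finset.sum_congr rfl fun _ _ => Finset.sum_comm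

/-- Weak reverse TDH post-processing identity: with
`c = s₀ᵀ·A_f + s_dᵀ·(f(x)ᵀ ⊗ G) + ẽᵀ`, `b = s_dᵀ·B + aᵀ·(I_t ⊗ G) + eᵀ`,
`F := −A_f·(I_ℓ ⊗ G⁻¹(B))` and `z := −c·(I_ℓ ⊗ G⁻¹(B)) + f(x)ᵀ ⊗ b`, one has
`z = s₀ᵀ·F + (f(x)ᵀ ⊗ aᵀ ⊗ g_q) − ẽᵀ·(I_ℓ ⊗ G⁻¹(B)) + f(x)ᵀ ⊗ eᵀ`. -/
theorem stmt18 (q k lq ℓ t : ℕ)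
    (Af : Matrix (Fin k) (Fin ℓ × (Fin k × Fin lq)) (ZMod q))
    (B : Matrix (Fin k) (Fin t × (Fin k × Fin lq)) (ZMod q))
    (DB : Matrix (Fin k × Fin lq) (Fin t × (Fin k × Fin lq)) (ZMod q))
    (hDB : Gmat q k lq * DB = B)
    (fx : Fin ℓ → ZMod q) (hfx : ∀ j, fx j = 0 ∨ fx j = 1)
    (s₀ sd : Fin k → ZMod q) (a : Fin t × Fin k → ZMod q)
    (etil : Fin ℓ × (Fin k × Fin lq) → ZMod q)
    (e : Fin t × (Fin k × Fin lq) → ZMod q)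
    (IlDB : Matrix (Fin ℓ × (Fin k × Fin lq)) (Fin ℓ × (Fin t × (Fin k × Fin lq))) (ZMod q))
    (hIlDB : IlDB = Matrix.of fun p p' => if p.1 = p'.1 then DB p.2 p'.2 else 0)
    (c : Fin ℓ × (Fin k × Fin lq) → ZMod q)
    (hc : c = Matrix.vecMul s₀ Af +
      Matrix.vecMul sd
        (Matrix.of fun i (p : Fin ℓ × (Fin k × Fin lq)) => fx p.1 * Gmat q k lq i p.2) + etil)
    (b : Fin t × (Fin k × Fin lq) → ZMod q)
    (hb : b = Matrix.vecMul sd B +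
      Matrix.vecMul a
        (Matrix.of fun (w : Fin t × Fin k) (p : Fin t × (Fin k × Fin lq)) =>
          if w.1 = p.1 then Gmat q k lq w.2 p.2 else 0) + e)
    (F : Matrix (Fin k) (Fin ℓ × (Fin t × (Fin k × Fin lq))) (ZMod q))
    (hF : F = -(Af * IlDB))
    (z : Fin ℓ × (Fin t × (Fin k × Fin lq)) → ZMod q)
    (hz : z = -(Matrix.vecMul c IlDB) +
      fun p : Fin ℓ × (Fin t × (Fin k × Fin lq)) => fx p.1 * b p.2) :
    z = Matrix.vecMul s₀ F +
        (fun p : Fin ℓ × (Fin t × (Fin k × Fin lq)) =>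
          fx p.1 * (a (p.2.1, p.2.2.1) * gq q lq p.2.2.2)) -
        Matrix.vecMul etil IlDB +
        fun p : Fin ℓ × (Fin t × (Fin k × Fin lq)) => fx p.1 * e p.2 := by
  subst hDB hIlDB hc hb hF hz
  funext p
  obtain ⟨i, u, m, bb⟩ := p
  simp only [Matrix.vecMul, Matrix.mul_apply, dotProduct, Matrix.of_apply, Gmat, gq,
    Pi.add_apply, Pi.sub_apply, Pi.neg_apply, Matrix.neg_apply,
    Fintype.sum_prod_type, add_mul, mul_ite, ite_mul, zero_mul, mul_zero,
    Finset.sum_ite_eq, Finset.sum_ite_eq', Finset.mem_univ, if_true,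
    Finset.sum_add_distrib, Finset.mul_sum, mul_add, Finset.sum_ite_irrel, Finset.sum_const_zero]
  simp only [Finset.sum_mul, mul_neg, neg_add, Finset.mul_sum, mul_comm, mul_left_comm, mul_assoc]
  rw [sum3rev fun x x1 x2 => s₀ x2 * (Af x2 (i, x, x1) * DB (x, x1) (u, m, bb)),
    ← Finset.sum_neg_distrib]
  have h2 : ∀ x : Fin k, ∑ y : Fin lq, ∑ x1 : Fin k, s₀ x * (Af x (i, x1, y) * DB (x1, y) (u, m, bb))
      = ∑ x1 : Fin k, ∑ y : Fin lq, s₀ x * (Af x (i, x1, y) * DB (x1, y) (u, m, bb)) :=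
    fun x => Finset.sum_comm
  simp only [h2]
  abel
end

section
/- Hash-shift equals authentication-key shift: for all row vectors h' ∈ Z_q^{n·k·log q}, r ∈ Z_q^k and d ∈ Z_q^n, it holds that h' + (dᵀ ⊗ G⁻¹(r)ᵀ ⊗ g_q)·(I_n ⊗ Gᵀ ⊗ I_{log q}) = h' + rᵀ·(dᵀ ⊗ G), where G = I_k ⊗ g_q and G⁻¹(r) ∈ {0,1}^{k·log q} is the bit decomposition of r. -/
open Matrix

/-- Hash-shift equals authentication-key shift: for all row vectors
`h' ∈ Z_q^{n·k·log q}`, `r ∈ Z_q^k` and `d ∈ Z_q^n`, with `G⁻¹(r)` the binary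
decomposition of `r` (so `G·G⁻¹(r) = r`),
`h' + (dᵀ ⊗ G⁻¹(r)ᵀ ⊗ g_q)·(I_n ⊗ Gᵀ ⊗ I_{log q}) = h' + rᵀ·(dᵀ ⊗ G)`. -/
theorem stmt19 (q k lq n : ℕ)
    (h' : Fin n × (Fin k × Fin lq) → ZMod q)
    (r : Fin k → ZMod q) (rb : Fin k × Fin lq → ZMod q)
    (hrb_bin : ∀ p, rb p = 0 ∨ rb p = 1)
    (hrb : (Gmat q k lq).mulVec rb = r)
    (d : Fin n → ZMod q) :
    h' + Matrix.vecMul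
        (fun w : Fin n × ((Fin k × Fin lq) × Fin lq) => d w.1 * (rb w.2.1 * gq q lq w.2.2))
        (Matrix.of fun (w : Fin n × ((Fin k × Fin lq) × Fin lq))
            (z : Fin n × (Fin k × Fin lq)) =>
          if w.1 = z.1 ∧ w.2.2 = z.2.2 then (Gmat q k lq)ᵀ w.2.1 z.2.1 else 0) =
      h' + Matrix.vecMul r
        (Matrix.of fun i (p : Fin n × (Fin k × Fin lq)) => d p.1 * Gmat q k lq i p.2) := by
  funext z
  simp only [Pi.add_apply]
  congr 1
  have hr : r z.2.1 = ∑ p : Fin k × Fin lq, Gmat q k lq z.2.1 p * rb p := by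
    rw [← hrb]; simp [Matrix.mulVec, dotProduct]
  simp only [Matrix.vecMul, dotProduct, Matrix.of_apply]
  rw [Fintype.sum_prod_type]
  have L : ∀ a : Fin n, ∑ x : (Fin k × Fin lq) × Fin lq,
      d a * (rb x.1 * gq q lq x.2) *
        (if a = z.1 ∧ x.2 = z.2.2 then (Gmat q k lq)ᵀ x.1 z.2.1 else 0)
      = if a = z.1 then d a * (gq q lq z.2.2 * ∑ p : Fin k × Fin lq,
          Gmat q k lq z.2.1 p * rb p) else 0 := by
    intro a
    by_cases ha : a = z.1
    · subst ha
      simp only [true_and, if_true, eq_self_iff_true, Finset.mul_sum]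
      rw [Fintype.sum_prod_type, Finset.sum_comm]
      rw [Fintype.sum_eq_single z.2.2 (by
        intro b hb
        apply Finset.sum_eq_zero; intro p _
        simp [hb])]
      apply Finset.sum_congr rfl
      intro p _
      simp only [if_true, Matrix.transpose_apply]
      ring
    · simp [ha]
  simp only [L]
  rw [Finset.sum_ite_eq' Finset.univ z.1 (fun a => d a * (gq q lq z.2.2 * ∑ p, Gmat q k lq z.2.1 p * rb p))]
  simp only [Finset.mem_univ, if_true, ← hr]
  simp only [Fintype.sum_prod_type] at *
  -- RHS: ∑ i, r i * (d z.1 * Gmat i z.2)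
  have : ∀ i : Fin k, r i * (d z.1 * Gmat q k lq i z.2) =
      if i = z.2.1 then r i * d z.1 * gq q lq z.2.2 else 0 := by
    intro i
    by_cases hi : i = z.2.1
    · subst hi; simp [Gmat, gq]; ring
    · simp [Gmat, Ne.symm hi, hi]
  rw [show (∑ x : Fin k, r x * (d z.1 * Gmat q k lq x z.2)) = _ from Finset.sum_congr rfl (fun i _ => this i)]
  rw [Finset.sum_ite_eq' Finset.univ z.2.1 (fun i => r i * d z.1 * gq q lq z.2.2)]
  simp
  ring
end
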